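/- arXiv:2406.09300 — 2 statements merged into one kernel-verified Lean document; each statement's English description precedes it below -/
import Mathlib

section
/- Soundness of the modular propagation rules: for each n ∈ X, K + 4^X proves form(Γ{♦A,[Δ₁,[…,[Δ_{n-2},[♦A,Δ_{n-1}]]…]]}) ⊃ form(Γ{♦A,[Δ₁,[…,[Δ_{n-2},[Δ_{n-1}]]…]]}). -/
/-! Formulas of modal logic in negation normal form. -/
inductive Formula : Type
  | pos : ℕ → Formula
  | neg : ℕ → Formula
  | and : Formula → Formula → Formula
  | or : Formula → Formula → Formula
  | box : Formula → Formula
  | dia : Formula → Formula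
  deriving DecidableEq

namespace Formula

/-- Negation by de Morgan duality. -/
def negf : Formula → Formula
  | pos p => neg p
  | neg p => pos p
  | and A B => or A.negf B.negf
  | or A B => and A.negf B.negf
  | box A => dia A.negf
  | dia A => box A.negf

/-- The (modal) degree of a formula. -/
def deg : Formula → ℕ
  | pos _ => 0
  | neg _ => 0
  | and A B => A.deg + B.deg
  | or A B => A.deg + B.deg
  | box A => A.deg + 1
  | dia A => A.deg + 1

/-- Implication `A ⊃ B := Ā ∨ B`. -/
def impl (A B : Formula) : Formula := or A.negf B

def bot : Formula := and (pos 0) (neg 0)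

/-- `♦ⁿ A`. -/
def diaIter : ℕ → Formula → Formula
  | 0, A => A
  | n+1, A => dia (diaIter n A)

end Formula

/-- Nested sequents: finite multisets of formulas and boxed sequents,
represented as list-like trees considered up to permutation (`NSeq.Perm`). -/
inductive NSeq : Type
  | nil : NSeq
  | fcons : Formula → NSeq → NSeq
  | bcons : NSeq → NSeq → NSeq

namespace NSeq

/-- Multiset union of nested sequents. -/
def append : NSeq → NSeq → NSeq
  | nil, Δ => Δ
  | fcons A Γ, Δ => fcons A (Γ.append Δ)
  | bcons B Γ, Δ => bcons B (Γ.append Δ)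

/-- Multiset-like equivalence of nested sequents (hereditary permutation). -/
inductive Perm : NSeq → NSeq → Prop
  | nil : Perm nil nil
  | fcons (A : Formula) {Γ Δ : NSeq} : Perm Γ Δ → Perm (fcons A Γ) (fcons A Δ)
  | bcons {B B' Γ Δ : NSeq} : Perm B B' → Perm Γ Δ → Perm (bcons B Γ) (bcons B' Δ)
  | swapff (A B : Formula) (Γ : NSeq) : Perm (fcons A (fcons B Γ)) (fcons B (fcons A Γ))
  | swapfb (A : Formula) (B Γ : NSeq) : Perm (fcons A (bcons B Γ)) (bcons B (fcons A Γ))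
  | swapbf (A : Formula) (B Γ : NSeq) : Perm (bcons B (fcons A Γ)) (fcons A (bcons B Γ))
  | swapbb (B C Γ : NSeq) : Perm (bcons B (bcons C Γ)) (bcons C (bcons B Γ))
  | trans {Γ Δ Θ : NSeq} : Perm Γ Δ → Perm Δ Θ → Perm Γ Θ

/-- The corresponding formula of a nested sequent. -/
def form : NSeq → Formula
  | nil => Formula.bot
  | fcons A Γ => Formula.or A Γ.form
  | bcons B Γ => Formula.or Γ.form (Formula.box B.form)

end NSeq

/-- Contexts: nested sequents with a single hole. -/
inductive Ctx : Type
  | hole : Ctx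
  | fcons : Formula → Ctx → Ctx
  | scons : NSeq → Ctx → Ctx
  | binto : Ctx → NSeq → Ctx

namespace Ctx

/-- Filling the hole of a context with a nested sequent. -/
def fill : Ctx → NSeq → NSeq
  | hole, Δ => Δ
  | fcons A C, Δ => NSeq.fcons A (C.fill Δ)
  | scons S C, Δ => NSeq.bcons S (C.fill Δ)
  | binto C S, Δ => NSeq.bcons (C.fill Δ) S

/-- The depth of a context. -/
def depth : Ctx → ℕ
  | hole => 0
  | fcons _ C => C.depth
  | scons _ C => C.depth
  | binto C _ => C.depth + 1

end Ctx

/-- `nestBox [Δ₁, …, Δₖ] Θ = [Δ₁, [Δ₂, [ … , [Δₖ, Θ'] … ]]]` where the innermost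
box contains `Δₖ` together with the box `[Θ]`; i.e. a chain of `k+1` nested boxes
whose `i`-th box contains `Δᵢ` and whose innermost box is `[Θ]`. -/
def nestBox : List NSeq → NSeq → NSeq
  | [], Θ => NSeq.bcons Θ NSeq.nil
  | Δ :: rest, Θ => NSeq.bcons (Δ.append (nestBox rest Θ)) NSeq.nil

/-- `iterBox n Δ`: `n` nested boxes around `Δ`. -/
def iterBox : ℕ → NSeq → NSeq
  | 0, Δ => Δ
  | n+1, Δ => NSeq.bcons (iterBox n Δ) NSeq.nil

/-- Proofs in the nested sequent system `nK` extended with the propagation rules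
`♦ₖₙ` for `n ∈ Xk`, the propagation rules `♦₄ₙ` for `n ∈ X4`, and the cut rule
restricted to cut formulas whose degree satisfies `ρ`.  The index `h` is an upper
bound on the height of the proof. -/
inductive Prf (Xk X4 : Set ℕ) (ρ : ℕ → Prop) : ℕ → NSeq → Prop
  | id (Γ : Ctx) (p : ℕ) (h : ℕ) :
      Prf Xk X4 ρ h (Γ.fill (NSeq.fcons (.pos p) (NSeq.fcons (.neg p) NSeq.nil)))
  | orR {h : ℕ} (Γ : Ctx) (A B : Formula) :
      Prf Xk X4 ρ h (Γ.fill (NSeq.fcons A (NSeq.fcons B NSeq.nil))) →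
      Prf Xk X4 ρ (h+1) (Γ.fill (NSeq.fcons (.or A B) NSeq.nil))
  | andR {h : ℕ} (Γ : Ctx) (A B : Formula) :
      Prf Xk X4 ρ h (Γ.fill (NSeq.fcons A NSeq.nil)) →
      Prf Xk X4 ρ h (Γ.fill (NSeq.fcons B NSeq.nil)) →
      Prf Xk X4 ρ (h+1) (Γ.fill (NSeq.fcons (.and A B) NSeq.nil))
  | boxR {h : ℕ} (Γ : Ctx) (A : Formula) :
      Prf Xk X4 ρ h (Γ.fill (NSeq.bcons (NSeq.fcons A NSeq.nil) NSeq.nil)) →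
      Prf Xk X4 ρ (h+1) (Γ.fill (NSeq.fcons (.box A) NSeq.nil))
  | diaR {h : ℕ} (Γ : Ctx) (A : Formula) (Δ : NSeq) :
      Prf Xk X4 ρ h (Γ.fill (NSeq.fcons (.dia A) (NSeq.bcons (NSeq.fcons A Δ) NSeq.nil))) →
      Prf Xk X4 ρ (h+1) (Γ.fill (NSeq.fcons (.dia A) (NSeq.bcons Δ NSeq.nil)))
  | propk {h : ℕ} (Γ : Ctx) (A : Formula) (Δs : List NSeq) (Δn : NSeq)
      (hn : Δs.length + 1 ∈ Xk) :
      Prf Xk X4 ρ h (Γ.fill (NSeq.fcons (.dia A) (nestBox Δs (NSeq.fcons A Δn)))) →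
      Prf Xk X4 ρ (h+1) (Γ.fill (NSeq.fcons (.dia A) (nestBox Δs Δn)))
  | prop4 {h : ℕ} (Γ : Ctx) (A : Formula) (Δs : List NSeq) (Δl : NSeq)
      (hn : Δs.length + 2 ∈ X4) :
      Prf Xk X4 ρ h (Γ.fill (NSeq.fcons (.dia A) (nestBox Δs (NSeq.fcons (.dia A) Δl)))) →
      Prf Xk X4 ρ (h+1) (Γ.fill (NSeq.fcons (.dia A) (nestBox Δs Δl)))
  | cut {h : ℕ} (Γ : Ctx) (A : Formula) (hA : ρ A.deg) :
      Prf Xk X4 ρ h (Γ.fill (NSeq.fcons A NSeq.nil)) →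
      Prf Xk X4 ρ h (Γ.fill (NSeq.fcons A.negf NSeq.nil)) →
      Prf Xk X4 ρ (h+1) (Γ.fill NSeq.nil)
  | exch {h : ℕ} {Γ Δ : NSeq} : NSeq.Perm Γ Δ → Prf Xk X4 ρ h Γ → Prf Xk X4 ρ h Δ

/-- No cut formula allowed: the cut-free system. -/
def cutFree : ℕ → Prop := fun _ => False

/-- Unrestricted cut. -/
def cutAll : ℕ → Prop := fun _ => True

/-- Provability (some proof of some height). -/
def Provable (Xk X4 : Set ℕ) (ρ : ℕ → Prop) (Γ : NSeq) : Prop := ∃ h, Prf Xk X4 ρ h Γ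

/-- Hilbert-style provability in `K + 4^X`: classical propositional logic,
axiom k, modus ponens, necessitation, and quasi-transitivity `♦ⁿA ⊃ ♦A` for `n ∈ X`. -/
inductive KProv (X : Set ℕ) : Formula → Prop
  | ax1 (A B : Formula) : KProv X (A.impl (B.impl A))
  | ax2 (A B C : Formula) : KProv X ((A.impl B).impl ((A.impl (B.impl C)).impl (A.impl C)))
  | andI (A B : Formula) : KProv X (A.impl (B.impl (A.and B)))
  | andE1 (A B : Formula) : KProv X ((A.and B).impl A)
  | andE2 (A B : Formula) : KProv X ((A.and B).impl B)
  | orI1 (A B : Formula) : KProv X (A.impl (A.or B))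
  | orI2 (A B : Formula) : KProv X (B.impl (A.or B))
  | orE (A B C : Formula) : KProv X ((A.impl C).impl ((B.impl C).impl ((A.or B).impl C)))
  | negI (A B : Formula) : KProv X ((A.impl B).impl ((A.impl B.negf).impl A.negf))
  | negE (A : Formula) : KProv X (A.negf.negf.impl A)
  | axK (A B : Formula) :
      KProv X ((Formula.box (A.impl B)).impl ((Formula.box A).impl (Formula.box B)))
  | mp {A B : Formula} : KProv X (A.impl B) → KProv X A → KProv X B
  | nec {A : Formula} : KProv X A → KProv X (Formula.box A)
  | path {n : ℕ} (hn : n ∈ X) (A : Formula) :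
      KProv X ((Formula.diaIter n A).impl (Formula.dia A))

/-- The approximations `X_p` of the completion of `X`. -/
def compStep (X : Set ℕ) : ℕ → Set ℕ
  | 0 => X
  | p+1 => compStep X p ∪ {k | ∃ m n, m ∈ compStep X p ∧ n ∈ compStep X p ∧ k = m + n - 1}

/-- The completion `X̂` of `X`. -/
def completion (X : Set ℕ) : Set ℕ := ⋃ p, compStep X p

section Aux

open Formula

variable {X : Set ℕ}

/-- Derivations from a set of hypotheses, with only modus ponens. -/
inductive Ded (X : Set ℕ) (H : Set Formula) : Formula → Prop
  | thm {A : Formula} : KProv X A → Ded X H A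
  | hyp {A : Formula} : A ∈ H → Ded X H A
  | mp {A B : Formula} : Ded X H (A.impl B) → Ded X H A → Ded X H B

theorem kprov_imp_id (A : Formula) : KProv X (A.impl A) :=
  KProv.mp (KProv.mp (KProv.ax2 A (A.impl A) A) (KProv.ax1 A A))
    (KProv.ax1 A (A.impl A))

theorem Ded.ded {H : Set Formula} {A B : Formula}
    (h : Ded X (insert A H) B) : Ded X H (A.impl B) := by
  induction h with
  | thm t => exact .mp (.thm (KProv.ax1 _ A)) (.thm t)
  | hyp hB =>
    rcases hB with rfl | hB
    · exact .thm (kprov_imp_id _)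
    · exact .mp (.thm (KProv.ax1 _ A)) (.hyp hB)
  | mp _ _ ih1 ih2 => exact .mp (.mp (.thm (KProv.ax2 A _ _)) ih2) ih1

theorem Ded.toKProv {A : Formula} (h : Ded X (∅ : Set Formula) A) : KProv X A := by
  induction h with
  | thm t => exact t
  | hyp h => exact absurd h (Set.notMem_empty _)
  | mp _ _ ih1 ih2 => exact KProv.mp ih1 ih2

theorem kded {A B : Formula} (h : Ded X (insert A (∅ : Set Formula)) B) :
    KProv X (A.impl B) := h.ded.toKProv

theorem ksyll {A B C : Formula} (h1 : KProv X (A.impl B)) (h2 : KProv X (B.impl C)) :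
    KProv X (A.impl C) :=
  kded (.mp (.thm h2) (.mp (.thm h1) (.hyp (Set.mem_insert _ _))))

theorem kor_elim {A B C : Formula} (h1 : KProv X (A.impl C)) (h2 : KProv X (B.impl C)) :
    KProv X ((A.or B).impl C) :=
  KProv.mp (KProv.mp (KProv.orE A B C) h1) h2

theorem kor_mono {A B C D : Formula} (h1 : KProv X (A.impl C)) (h2 : KProv X (B.impl D)) :
    KProv X ((A.or B).impl (C.or D)) :=
  kor_elim (ksyll h1 (KProv.orI1 C D)) (ksyll h2 (KProv.orI2 C D))

theorem kor_comm (A B : Formula) : KProv X ((A.or B).impl (B.or A)) :=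
  kor_elim (KProv.orI2 B A) (KProv.orI1 B A)

theorem kor_assocL (A B C : Formula) : KProv X ((A.or (B.or C)).impl ((A.or B).or C)) :=
  kor_elim (ksyll (KProv.orI1 A B) (KProv.orI1 _ C))
    (kor_elim (ksyll (KProv.orI2 A B) (KProv.orI1 _ C)) (KProv.orI2 _ C))

theorem kor_assocR (A B C : Formula) : KProv X (((A.or B).or C).impl (A.or (B.or C))) :=
  kor_elim (kor_elim (KProv.orI1 A _) (ksyll (KProv.orI1 B C) (KProv.orI2 A _)))
    (ksyll (KProv.orI2 B C) (KProv.orI2 A _))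

/-- `((P∨Q)∨R) ⊃ ((P∨R)∨Q)`. -/
theorem kor_rot (P Q R : Formula) : KProv X (((P.or Q).or R).impl ((P.or R).or Q)) :=
  kor_elim (kor_elim (ksyll (KProv.orI1 P R) (KProv.orI1 _ Q)) (KProv.orI2 _ Q))
    (ksyll (KProv.orI2 P R) (KProv.orI1 _ Q))

theorem kexfalso (A B : Formula) : KProv X (A.impl (A.negf.impl B)) := by
  apply kded
  apply Ded.ded
  have hA : Ded X (insert A.negf (insert A ∅)) A :=
    .hyp (Set.mem_insert_of_mem _ (Set.mem_insert _ _))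
  have hnA : Ded X (insert A.negf (insert A ∅)) A.negf := .hyp (Set.mem_insert _ _)
  have h1 : Ded X (insert A.negf (insert A ∅)) (B.negf.impl A) :=
    .mp (.thm (KProv.ax1 _ _)) hA
  have h2 : Ded X (insert A.negf (insert A ∅)) (B.negf.impl A.negf) :=
    .mp (.thm (KProv.ax1 _ _)) hnA
  exact .mp (.thm (KProv.negE B)) (.mp (.mp (.thm (KProv.negI B.negf A)) h1) h2)

theorem kbot_elim (C : Formula) : KProv X (Formula.bot.impl C) := by
  apply kded
  have h : Ded X (insert Formula.bot (∅ : Set Formula)) Formula.bot := .hyp (Set.mem_insert _ _)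
  have h1 : Ded X (insert Formula.bot (∅ : Set Formula)) (pos 0) :=
    .mp (.thm (KProv.andE1 _ _)) h
  have h2 : Ded X (insert Formula.bot (∅ : Set Formula)) (neg 0) :=
    .mp (.thm (KProv.andE2 _ _)) h
  exact .mp (.mp (.thm (kexfalso (pos 0) C)) h1) h2

/-- `(B̄ ⊃ C) ⊃ (C ∨ B)`. -/
theorem kor_of_imp_neg (B C : Formula) : KProv X ((B.negf.impl C).impl (C.or B)) := by
  apply kded
  set H : Set Formula := insert (B.negf.impl C) ∅ with hH
  have e1 : Ded X H (((C.or B).negf).impl C) := by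
    apply Ded.ded
    have hh : Ded X (insert (C.or B).negf H) (B.negf.impl C) :=
      .hyp (Set.mem_insert_of_mem _ (Set.mem_insert _ _))
    have hx : Ded X (insert (C.or B).negf H) ((C.or B).negf) := .hyp (Set.mem_insert _ _)
    have hb : Ded X (insert (C.or B).negf H) B.negf :=
      .mp (.thm (KProv.andE2 C.negf B.negf)) hx
    exact .mp hh hb
  have e2 : Ded X H (((C.or B).negf).impl C.negf) := .thm (KProv.andE1 C.negf B.negf)
  have e3 : Ded X H ((C.or B).negf.negf) :=
    .mp (.mp (.thm (KProv.negI (C.or B).negf C)) e1) e2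
  exact .mp (.thm (KProv.negE (C.or B))) e3

theorem kand_or_elim (P Q : Formula) : KProv X ((Formula.and Q.negf (P.or Q)).impl P) := by
  apply kded
  set H : Set Formula := insert (Formula.and Q.negf (P.or Q)) ∅ with hH
  have hx : Ded X H (Formula.and Q.negf (P.or Q)) := .hyp (Set.mem_insert _ _)
  have hpq : Ded X H (P.or Q) := .mp (.thm (KProv.andE2 _ _)) hx
  have hQP : Ded X H (Q.impl P) := by
    apply Ded.ded
    have hq' : Ded X (insert Q H) Q.negf :=
      .mp (.thm (KProv.andE1 _ _)) (.hyp (Set.mem_insert_of_mem _ (Set.mem_insert _ _)))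
    exact .mp (.mp (.thm (kexfalso Q P)) (.hyp (Set.mem_insert _ _))) hq'
  exact .mp (.mp (.mp (.thm (KProv.orE P Q P)) (.thm (kprov_imp_id P))) hQP) hpq

theorem kbox_mono {A B : Formula} (h : KProv X (A.impl B)) :
    KProv X ((box A).impl (box B)) :=
  KProv.mp (KProv.axK A B) (KProv.nec h)

theorem kbox_and (A B : Formula) :
    KProv X ((box A).impl ((box B).impl (box (A.and B)))) :=
  ksyll (KProv.mp (KProv.axK A (B.impl (A.and B))) (KProv.nec (KProv.andI A B)))
    (KProv.axK B (A.and B))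

/-- `□(P∨Q) ⊃ □P ∨ ◇Q`. -/
theorem kbox_or_dia (P Q : Formula) :
    KProv X ((box (P.or Q)).impl ((box P).or (dia Q))) := by
  apply kded
  set H : Set Formula := insert (box (P.or Q)) ∅ with hH
  have step : Ded X H ((dia Q).negf.impl (box P)) := by
    apply Ded.ded
    have h' : Ded X (insert (dia Q).negf H) (box (P.or Q)) :=
      .hyp (Set.mem_insert_of_mem _ (Set.mem_insert _ _))
    have hn : Ded X (insert (dia Q).negf H) (box Q.negf) := .hyp (Set.mem_insert _ _)
    have hand : Ded X (insert (dia Q).negf H) (box (Formula.and Q.negf (P.or Q))) :=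
      .mp (.mp (.thm (kbox_and Q.negf (P.or Q))) hn) h'
    exact .mp (.thm (kbox_mono (kand_or_elim P Q))) hand
  exact .mp (.thm (kor_of_imp_neg (dia Q) (box P))) step

theorem negf_negf (A : Formula) : A.negf.negf = A := by
  induction A <;> simp [Formula.negf, *]

theorem diaIter_dia (n : ℕ) (A : Formula) : diaIter n (dia A) = diaIter (n+1) A := by
  induction n with
  | zero => rfl
  | succ n ih => simp only [Formula.diaIter, ih]

theorem append_form1 (Δ Θ : NSeq) :
    KProv X ((Δ.append Θ).form.impl ((Δ.form).or Θ.form)) := by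
  induction Δ with
  | nil => exact KProv.orI2 _ _
  | fcons A Δ ih =>
    exact ksyll (kor_mono (kprov_imp_id A) ih) (kor_assocL _ _ _)
  | bcons B Δ _ ih =>
    exact ksyll (kor_mono ih (kprov_imp_id _)) (kor_rot _ _ _)

theorem append_form2 (Δ Θ : NSeq) :
    KProv X (((Δ.form).or Θ.form).impl (Δ.append Θ).form) := by
  induction Δ with
  | nil => exact kor_elim (kbot_elim _) (kprov_imp_id _)
  | fcons A Δ ih =>
    exact ksyll (kor_assocR _ _ _) (kor_mono (kprov_imp_id A) ih)
  | bcons B Δ _ ih =>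
    exact ksyll (kor_rot _ _ _) (kor_mono ih (kprov_imp_id _))

theorem nest_lemma (A : Formula) : ∀ (Δs : List NSeq) (Θ : NSeq),
    KProv X ((nestBox Δs (NSeq.fcons (Formula.dia A) Θ)).form.impl
      ((nestBox Δs Θ).form.or (diaIter (Δs.length + 1) (dia A)))) := by
  intro Δs
  induction Δs with
  | nil =>
    intro Θ
    refine kor_elim (kbot_elim _) ?_
    refine ksyll (kbox_mono (kor_comm (dia A) Θ.form)) ?_
    exact ksyll (kbox_or_dia Θ.form (dia A))
      (kor_mono (KProv.orI2 Formula.bot _) (kprov_imp_id _))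
  | cons Δ rest ih =>
    intro Θ
    refine kor_elim (kbot_elim _) ?_
    have inner : KProv X
        ((Δ.append (nestBox rest (NSeq.fcons (Formula.dia A) Θ))).form.impl
          ((Δ.append (nestBox rest Θ)).form.or (diaIter (rest.length + 1) (dia A)))) := by
      refine ksyll (append_form1 _ _) ?_
      refine ksyll (kor_mono (kprov_imp_id Δ.form) (ih Θ)) ?_
      refine ksyll (kor_assocL _ _ _) ?_
      exact kor_mono (append_form2 _ _) (kprov_imp_id _)
    refine ksyll (kbox_mono inner) ?_
    refine ksyll (kbox_or_dia _ _) ?_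
    exact kor_mono (KProv.orI2 Formula.bot _) (kprov_imp_id _)

theorem ctx_mono (C : Ctx) {S T : NSeq} (h : KProv X (S.form.impl T.form)) :
    KProv X ((C.fill S).form.impl (C.fill T).form) := by
  induction C with
  | hole => exact h
  | fcons A C ih => exact kor_mono (kprov_imp_id A) ih
  | scons S' C ih => exact kor_mono ih (kprov_imp_id _)
  | binto C S' ih => exact kor_mono (kprov_imp_id _) (kbox_mono ih)

end Aux

/-- Soundness of the modular propagation rule `♦₄ₙ` for `n ∈ X`. -/
theorem prop4_sound (X : Set ℕ) (hX : X ⊆ {n : ℕ | 1 < n}) (n : ℕ) (hn : n ∈ X)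
    (Γ : Ctx) (A : Formula) (Δs : List NSeq) (Δl : NSeq) (hlen : Δs.length + 2 = n) :
    KProv X ((Γ.fill (NSeq.fcons (.dia A) (nestBox Δs (NSeq.fcons (.dia A) Δl)))).form.impl
             (Γ.fill (NSeq.fcons (.dia A) (nestBox Δs Δl))).form) := by
  apply ctx_mono
  have hD : KProv X ((Formula.diaIter (Δs.length + 1) (Formula.dia A)).impl (Formula.dia A)) := by
    rw [diaIter_dia]
    have h2 : Δs.length + 1 + 1 = n := hlen
    rw [h2]
    exact KProv.path hn A
  have core := nest_lemma (X := X) A Δs Δl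
  exact kor_elim (KProv.orI1 _ _)
    (ksyll core (ksyll (kor_mono (kprov_imp_id _) hD) (kor_comm _ _)))
end

section
/- Soundness of the ♦ propagation rule of nK with respect to K: K proves form(Γ{♦A, [A, Δ]}) ⊃ form(Γ{♦A, [Δ]}) for every context Γ{ }, formula A, and nested sequent Δ. -/
namespace KProvAux

open Formula

theorem negf_negf (A : Formula) : A.negf.negf = A := by
  induction A <;> simp [Formula.negf, *]

variable {X : Set ℕ}

/-- lift a theorem under a hypothesis -/
theorem lift {B : Formula} (A : Formula) (h : KProv X B) : KProv X (A.impl B) :=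
  (KProv.ax1 B A).mp h

/-- modus ponens under a hypothesis -/
theorem mp2 {A B C : Formula} (h1 : KProv X (A.impl (B.impl C)))
    (h2 : KProv X (A.impl B)) : KProv X (A.impl C) :=
  ((KProv.ax2 A B C).mp h2).mp h1

theorem impl_refl (A : Formula) : KProv X (A.impl A) :=
  mp2 (KProv.ax1 A (A.impl A)) (KProv.ax1 A A)

theorem syll {A B C : Formula} (h1 : KProv X (A.impl B))
    (h2 : KProv X (B.impl C)) : KProv X (A.impl C) :=
  mp2 (lift A h2) h1

/-- from `A ⊃ (B ⊃ C)` conclude `(A ⊃ B) ⊃ (A ⊃ C)` -/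
theorem s_rule {A B C : Formula} (h : KProv X (A.impl (B.impl C))) :
    KProv X ((A.impl B).impl (A.impl C)) :=
  mp2 (KProv.ax2 A B C) (lift _ h)

theorem swap {A B C : Formula} (h : KProv X (A.impl (B.impl C))) :
    KProv X (B.impl (A.impl C)) :=
  syll (KProv.ax1 B A) (s_rule h)

/-- modus ponens two hypotheses deep -/
theorem mp2d {A B C D : Formula} (h1 : KProv X (A.impl (B.impl (C.impl D))))
    (h2 : KProv X (A.impl (B.impl C))) : KProv X (A.impl (B.impl D)) :=
  mp2 (mp2 (lift A (KProv.ax2 B C D)) h2) h1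

theorem orE_rule {A B C : Formula} (h1 : KProv X (A.impl C))
    (h2 : KProv X (B.impl C)) : KProv X ((A.or B).impl C) :=
  ((KProv.orE A B C).mp h1).mp h2

theorem or_mono_r {A B C : Formula} (h : KProv X (B.impl C)) :
    KProv X ((A.or B).impl (A.or C)) :=
  orE_rule (KProv.orI1 A C) (syll h (KProv.orI2 A C))

theorem or_mono_l {A B C : Formula} (h : KProv X (A.impl B)) :
    KProv X ((A.or C).impl (B.or C)) :=
  orE_rule (syll h (KProv.orI1 B C)) (KProv.orI2 B C)

theorem box_mono {A B : Formula} (h : KProv X (A.impl B)) :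
    KProv X ((Formula.box A).impl (Formula.box B)) :=
  (KProv.axK A B).mp h.nec

/-- ex falso: `⊥ ⊃ C` -/
theorem exfalso (C : Formula) : KProv X (Formula.bot.impl C) := by
  have a : KProv X (Formula.bot.impl (C.negf.impl (pos 0))) :=
    syll (KProv.andE1 (pos 0) (neg 0)) (KProv.ax1 (pos 0) C.negf)
  have b : KProv X (Formula.bot.impl (C.negf.impl (neg 0))) :=
    syll (KProv.andE2 (pos 0) (neg 0)) (KProv.ax1 (neg 0) C.negf)
  have c : KProv X (Formula.bot.impl C.negf.negf) :=
    mp2 (mp2 (lift _ (KProv.negI C.negf (pos 0))) a) b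
  exact syll c (KProv.negE C)

/-- contradiction: `A ⊃ (¬A ⊃ D)` -/
theorem contra (A D : Formula) : KProv X (A.impl (A.negf.impl D)) := by
  have a1 : KProv X (A.impl (A.negf.impl (D.negf.impl A))) :=
    mp2 (lift A (KProv.ax1 (D.negf.impl A) A.negf)) (KProv.ax1 A D.negf)
  have a2 : KProv X (A.impl (A.negf.impl (D.negf.impl A.negf))) :=
    lift A (KProv.ax1 A.negf D.negf)
  have a3 : KProv X (A.impl (A.negf.impl D.negf.negf)) :=
    mp2d (mp2d (lift A (lift A.negf (KProv.negI D.negf A))) a1) a2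
  exact mp2d (lift A (lift A.negf (KProv.negE D))) a3

/-- classical step: from `¬P ⊃ (Y ⊃ Q)` conclude `Y ⊃ (P ∨ Q)` -/
theorem classical_or {P Y Q : Formula} (h : KProv X (P.negf.impl (Y.impl Q))) :
    KProv X (Y.impl (P.or Q)) := by
  have hand1 : KProv X ((P.or Q).negf.impl P.negf) := KProv.andE1 P.negf Q.negf
  have hand2 : KProv X ((P.or Q).negf.impl Q.negf) := KProv.andE2 P.negf Q.negf
  have t2 : KProv X (Y.impl ((P.or Q).negf.impl Q)) := swap (syll hand1 h)
  have t4 : KProv X (Y.impl (P.or Q).negf.negf) :=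
    mp2 (mp2 (lift Y (KProv.negI (P.or Q).negf Q)) t2) (lift Y hand2)
  have := syll t4 (KProv.negE (P.or Q))
  exact this

/-- the K core: `□(A ∨ D) ⊃ (♦A ∨ □D)` -/
theorem k_core (A D : Formula) :
    KProv X ((Formula.box (A.or D)).impl ((Formula.dia A).or (Formula.box D))) := by
  have p1 : KProv X ((A.or D).impl (A.negf.impl D)) :=
    orE_rule (contra A D) (KProv.ax1 D A.negf)
  have p0 : KProv X (A.negf.impl ((A.or D).impl D)) := swap p1
  have p2 : KProv X ((Formula.box A.negf).impl
      ((Formula.box (A.or D)).impl (Formula.box D))) :=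
    syll ((KProv.axK A.negf ((A.or D).impl D)).mp p0.nec) (KProv.axK (A.or D) D)
  exact classical_or (P := Formula.dia A) p2

/-- monotonicity through a context -/
theorem ctx_mono {Γ Δ : NSeq} (C : Ctx) (h : KProv X (Γ.form.impl Δ.form)) :
    KProv X ((C.fill Γ).form.impl (C.fill Δ).form) := by
  induction C with
  | hole => exact h
  | fcons A C ih => exact or_mono_r ih
  | scons S C ih => exact or_mono_l ih
  | binto C S ih => exact or_mono_r (box_mono ih)

end KProvAux

/-- Soundness of the `♦` propagation rule of `nK` with respect to `K`:
`K ⊢ form(Γ{♦A, [A, Δ]}) ⊃ form(Γ{♦A, [Δ]})`. -/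
theorem dia_sound (Γ : Ctx) (A : Formula) (Δ : NSeq) :
    KProv ∅
      ((Γ.fill (NSeq.fcons (.dia A) (NSeq.bcons (NSeq.fcons A Δ) NSeq.nil))).form.impl
       (Γ.fill (NSeq.fcons (.dia A) (NSeq.bcons Δ NSeq.nil))).form) := by
  apply KProvAux.ctx_mono
  -- goal: ⊢ (♦A ∨ (⊥ ∨ □(A ∨ Δ.form))) ⊃ (♦A ∨ (⊥ ∨ □Δ.form))
  show KProv ∅
    ((Formula.or (.dia A) (Formula.or Formula.bot (Formula.box (Formula.or A Δ.form)))).impl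
     (Formula.or (.dia A) (Formula.or Formula.bot (Formula.box Δ.form))))
  apply KProvAux.orE_rule
  · exact KProv.orI1 _ _
  · apply KProvAux.orE_rule
    · exact KProvAux.exfalso _
    · refine KProvAux.syll (KProvAux.k_core A Δ.form) ?_
      exact KProvAux.or_mono_r (KProv.orI2 _ _)
end
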